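/- With gcd(m,n) = 1 and p an (m,n)-parking function with fixed point x_p in alcove A_p: every point of A_p is periodic under p with period dividing m, and every point not in A_p is eventually mapped into A_p by iterates of p. In particular, the set of periodic (non-fixed) points of p is exactly A_p \ {x_p}. -/

import Mathlib

/-- The shift during the action of letter `i` on `ℝ^m`: add `m` to coordinate `i`
and subtract `1` from every coordinate. -/
def shiftVec (m : ℕ) (i : Fin m) (x : Fin m → ℝ) : Fin m → ℝ :=
  fun j => x j - 1 + if j = i then (m : ℝ) else 0

/-- Sort the coordinates of a vector into weakly increasing order. -/
noncomputable def sortVec {m : ℕ} (x : Fin m → ℝ) : Fin m → ℝ := x ∘ Tuple.sort x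

/-- The action of the letter `i ∈ [m]` on `V^m`: shift, then re-sort. -/
noncomputable def letterV (m : ℕ) (i : Fin m) (x : Fin m → ℝ) : Fin m → ℝ :=
  sortVec (shiftVec m i x)

/-- `stepsV m p x i = p_{i-1} ⋯ p_1 p_0 ⋅ x`: the word acts letter by letter, the
letter `p 0` (rightmost) acting first. -/
noncomputable def stepsV (m : ℕ) (p : ℕ → Fin m) (x : Fin m → ℝ) : ℕ → (Fin m → ℝ)
  | 0 => x
  | k+1 => letterV m (p k) (stepsV m p x k)

/-- Membership in the Weyl chamber `V^m`: coordinates sum to `0` and are weakly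
increasing. -/
def InV (m : ℕ) (x : Fin m → ℝ) : Prop := (∑ j, x j) = 0 ∧ Monotone x

/-- The Euclidean norm on `ℝ^m`. -/
noncomputable def eNorm {m : ℕ} (x : Fin m → ℝ) : ℝ := Real.sqrt (∑ j, (x j) ^ 2)

/-- `p` (a word of length `n` in `[m]`, extended arbitrarily) is an
`(m,n)`-parking function: `#{j < n : p_j < i} ≥ i·n/m` for all `1 ≤ i ≤ m`. -/
def IsParking (m n : ℕ) (p : ℕ → Fin m) : Prop :=
  ∀ i : ℕ, 1 ≤ i → i ≤ m →
    i * n ≤ ((Finset.range n).filter (fun j => (p j : ℕ) < i)).card * m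

/-- `y` lies in the closed alcove (of the arrangement `x_j - x_k = m t`, `t ∈ ℤ`)
containing the point `x` (assumed in the interior of its alcove). -/
def SameClosedAlcove (m : ℕ) (x y : Fin m → ℝ) : Prop :=
  ∀ (j k : Fin m) (t : ℤ),
    (x j - x k < (m : ℝ) * t → y j - y k ≤ (m : ℝ) * t) ∧
    ((m : ℝ) * t < x j - x k → (m : ℝ) * t ≤ y j - y k)

/-!
The orbit of `xp` under the periodic word is `n`-periodic, and the sorting permutations of one
period compose to a permutation `τ` of the labels. Reading `xp = p^(nL) ⋅ xp` on a coordinate with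
`τ^L j = j` gives `n L ∈ m ℤ`, so `gcd(m, n) = 1` makes `τ` an `m`-cycle. A point `y` of the closed
alcove is sorted by the same permutations as `xp`, hence `p^(nm) ⋅ y = xp + (y - xp) ∘ τ^m = y`.

For an arbitrary `x`, the squared distance to the orbit of `xp` never increases (rearrangement
inequality), which bounds the orbit of `x`. So two iterates `p^(na) ⋅ x` and `p^(nb) ⋅ x` have the
same matrix `⌊(x_j - x_k) / m⌋`; on such a cell the action is affine with a permutation as linear
part, and a bounded orbit of such a map is periodic. From time `na` on the distance is therefore
periodic, hence constant, and the equality case of the rearrangement inequality says that `x` is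
sorted together with `xp` at every step. Along the orbit of `xp` the gap between two labels moves
in steps of `m` and, `τ` being an `m`-cycle, takes both signs; the step where it is the least
positive value yields the corresponding inequality of the closed alcove.
-/

open Finset Function

lemma Function.Periodic.of_dvd {α : Type*} {f : ℕ → α} {c d : ℕ} (h : Periodic f c)
    (hcd : c ∣ d) : Periodic f d := by
  obtain ⟨k, rfl⟩ := hcd
  simpa [mul_comm] using h.nat_mul k

lemma Antitone.apply_succ_eq_of_periodic {α : Type*} [PartialOrder α] {f : ℕ → α}
    (hf : Antitone f) {R : ℕ} (hR : 0 < R) (hp : Periodic f R) (t : ℕ) : f (t + 1) = f t :=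
  le_antisymm (hf t.le_succ) ((hp t).symm.trans_le (hf (by omega)))

lemma eq_zero_of_forall_abs_natCast_mul_le {c B : ℝ} (h : ∀ q : ℕ, |q * c| ≤ B) : c = 0 := by
  by_contra hc
  have hc' : 0 < |c| := abs_pos.2 hc
  obtain ⟨q, hq⟩ := exists_nat_gt (B / |c|)
  have := h q
  rw [abs_mul, Nat.abs_cast] at this
  rw [div_lt_iff₀ hc'] at hq
  linarith

lemma exists_int_threshold {m : ℕ} (hm : 0 < m) (r : ℝ) :
    ∃ g : ℤ, ∀ G : ℤ, 0 < r + m * G ↔ g ≤ G := by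
  have hm' : (0 : ℝ) < m := by exact_mod_cast hm
  refine ⟨⌊-r / m⌋ + 1, fun G => ?_⟩
  rw [Int.add_one_le_iff, Int.floor_lt, div_lt_iff₀ hm']
  constructor <;> intro <;> linarith

lemma exists_lt_eq_of_le_add_one {g : ℕ → ℤ} (hg : ∀ t, g (t + 1) ≤ g t + 1) {a b : ℕ}
    {K : ℤ} (hab : a ≤ b) (ha : g a < K) (hb : K ≤ g b) : ∃ t, a < t ∧ g t = K := by
  induction b, hab using Nat.le_induction with
  | base => omega
  | succ b hab ih =>
    by_cases h : K ≤ g b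
    · exact ih h
    · exact ⟨b + 1, by omega, by linarith [hg b]⟩

section Cycle

variable {m : ℕ} {σ : Equiv.Perm (Fin m)}

lemma dvd_sub_of_pow_apply_eq (h : ∀ j L, (σ ^ L) j = j → m ∣ L) {a b : ℕ} (hab : a ≤ b)
    (i : Fin m) (he : (σ ^ a) i = (σ ^ b) i) : m ∣ b - a :=
  h _ _ (by rw [← Equiv.Perm.mul_apply, pow_sub_mul_pow σ hab, he])

lemma surjective_pow_apply_of_dvd (h : ∀ j L, (σ ^ L) j = j → m ∣ L) (i : Fin m) :
    Surjective fun k : Fin m => (σ ^ (k : ℕ)) i := by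
  refine Finite.injective_iff_surjective.1 fun a b he => ?_
  wlog hab : a ≤ b generalizing a b
  · exact (this b a he.symm (le_of_not_ge hab)).symm
  rcases (Fin.le_def.1 hab).lt_or_eq with hlt | heq
  · have := Nat.le_of_dvd (Nat.sub_pos_of_lt hlt) (dvd_sub_of_pow_apply_eq h hab i he)
    omega
  · exact Fin.ext heq

lemma pow_eq_one_of_dvd (h : ∀ j L, (σ ^ L) j = j → m ∣ L) : σ ^ m = 1 := by
  refine Equiv.ext fun i => ?_
  obtain ⟨k, hk : (σ ^ (k : ℕ)) i = (σ ^ m) i⟩ := surjective_pow_apply_of_dvd h i ((σ ^ m) i)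
  have := Nat.le_of_dvd (by omega) (dvd_sub_of_pow_apply_eq h k.isLt.le i hk)
  rw [show (k : ℕ) = 0 by omega] at hk
  simpa using hk.symm

end Cycle

section AffineRecurrence

variable {ι : Type*} {z : ℕ → ι → ℝ} {κ : Equiv.Perm ι}

lemma sub_eq_comp_pow_of_eq_add_comp (hz : ∀ k, z (k + 1) = z 1 + (z k - z 0) ∘ κ) (k i : ℕ) :
    z (k + i) - z i = (z k - z 0) ∘ ⇑(κ ^ i) := by
  induction i with
  | zero => simp
  | succ i ih =>
    rw [← add_assoc, hz, hz i, pow_succ, Equiv.Perm.coe_mul, ← comp_assoc, ← ih]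
    funext j
    simp only [Pi.add_apply, Pi.sub_apply, comp_apply]
    ring

/-- The map `z k ↦ z (k + 1)` is affine with linear part `κ`, so its `orderOf κ`-th power is a
translation, which must be trivial on a bounded orbit. -/
lemma exists_pos_eq_of_eq_add_comp [Finite ι] (hz : ∀ k, z (k + 1) = z 1 + (z k - z 0) ∘ κ)
    {C : ℝ} (hC : ∀ k j, |z k j| ≤ C) : ∃ r, 0 < r ∧ z r = z 0 := by
  refine ⟨orderOf κ, orderOf_pos κ, funext fun j => ?_⟩
  set r := orderOf κ
  have hshift (k : ℕ) : z (k + r) j = z k j + (z r j - z 0 j) := by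
    have := congrFun (sub_eq_comp_pow_of_eq_add_comp hz k r) j
    simp only [pow_orderOf_eq_one, Equiv.Perm.coe_one, comp_id, Pi.sub_apply, r] at this
    linarith
  have hmul (q : ℕ) : z (q * r) j = z 0 j + q * (z r j - z 0 j) := by
    induction q with
    | zero => simp
    | succ q ih => rw [add_one_mul, hshift, ih]; push_cast; ring
  have := eq_zero_of_forall_abs_natCast_mul_le (B := 2 * C) fun q => by
    rw [show (q : ℝ) * (z r j - z 0 j) = z (q * r) j - z 0 j by rw [hmul]; ring]
    linarith [abs_sub (z (q * r) j) (z 0 j), hC (q * r) j, hC 0 j]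
  linarith

end AffineRecurrence

section Sorting

variable {m : ℕ}

lemma sortVec_eq_comp_sort_of_monovary {a b : Fin m → ℝ} (hba : Monovary b a)
    (ha : Injective a) : sortVec b = b ∘ Tuple.sort a := by
  refine (Tuple.comp_sort_eq_comp_iff_monotone.2 fun i j hij => ?_).symm
  rcases (Tuple.monotone_sort a hij).lt_or_eq with hlt | heq
  · exact hba hlt
  · rw [(Tuple.sort a).injective (ha heq)]

lemma Tuple.sort_eq_sort_of_le_iff {v w : Fin m → ℝ} (h : ∀ j k, v j ≤ v k ↔ w j ≤ w k) :
    Tuple.sort w = Tuple.sort v := by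
  rw [eq_comm, Tuple.eq_sort_iff]
  refine ⟨fun i j hij => (h _ _).1 (Tuple.monotone_sort v hij), fun i j hij hw => ?_⟩
  have hv : v (Tuple.sort v i) = v (Tuple.sort v j) :=
    le_antisymm (Tuple.monotone_sort v hij.le) ((h _ _).2 hw.symm.le)
  exact (Tuple.eq_sort_iff.1 rfl).2 i j hij hv

lemma monovary_sortVec (a b : Fin m → ℝ) : Monovary (sortVec a) (sortVec b) :=
  (Tuple.monotone_sort a).monovary (Tuple.monotone_sort b)

lemma sum_sq_sub_eq {ι : Type*} [Fintype ι] (u v : ι → ℝ) :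
    ∑ j, (u j - v j) ^ 2 = ∑ j, u j ^ 2 + ∑ j, v j ^ 2 - 2 * ∑ j, u j * v j := by
  rw [← sum_add_distrib, mul_sum, ← sum_sub_distrib]
  exact sum_congr rfl fun j _ => by ring

lemma sum_sortVec_sq (a : Fin m → ℝ) : ∑ j, sortVec a j ^ 2 = ∑ j, a j ^ 2 :=
  Equiv.sum_comp (Tuple.sort a) (fun j => a j ^ 2)

lemma exists_perm_sum_mul_eq (a b : Fin m → ℝ) : ∃ σ : Equiv.Perm (Fin m),
    ∑ j, sortVec a (σ j) * sortVec b j = ∑ j, a j * b j ∧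
      (Monovary (sortVec a ∘ σ) (sortVec b) ↔ Monovary a b) := by
  have hσ (j : Fin m) : sortVec a (((Tuple.sort a)⁻¹ * Tuple.sort b) j) = a (Tuple.sort b j) := by
    simp [sortVec]
  refine ⟨(Tuple.sort a)⁻¹ * Tuple.sort b, ?_, ?_⟩
  · simp only [hσ]
    exact Equiv.sum_comp (Tuple.sort b) fun j => a j * b j
  · rw [show sortVec a ∘ _ = a ∘ Tuple.sort b from funext hσ]
    refine ⟨fun h => ?_, fun h => h.comp_right _⟩
    simpa [sortVec, comp_assoc] using h.comp_right (Tuple.sort b).symm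

lemma sum_sq_sortVec_sub_le (a b : Fin m → ℝ) :
    ∑ j, (sortVec a j - sortVec b j) ^ 2 ≤ ∑ j, (a j - b j) ^ 2 := by
  obtain ⟨σ, hσ, -⟩ := exists_perm_sum_mul_eq a b
  have := (monovary_sortVec a b).sum_comp_perm_mul_le_sum_mul (σ := σ)
  rw [sum_sq_sub_eq, sum_sq_sub_eq, sum_sortVec_sq, sum_sortVec_sq]
  linarith

lemma sum_sq_sortVec_sub_eq_iff (a b : Fin m → ℝ) :
    ∑ j, (sortVec a j - sortVec b j) ^ 2 = ∑ j, (a j - b j) ^ 2 ↔ Monovary a b := by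
  obtain ⟨σ, hσ, hmono⟩ := exists_perm_sum_mul_eq a b
  rw [← hmono, ← (monovary_sortVec a b).sum_comp_perm_mul_eq_sum_mul_iff, hσ, sum_sq_sub_eq,
    sum_sq_sub_eq, sum_sortVec_sq, sum_sortVec_sq]
  constructor <;> intro h <;> linarith

end Sorting

def shiftDiff {m : ℕ} (i j k : Fin m) : ℤ :=
  (if j = i then 1 else 0) - (if k = i then 1 else 0)

lemma shiftVec_sub_shiftVec (m : ℕ) (i j k : Fin m) (x : Fin m → ℝ) :
    shiftVec m i x j - shiftVec m i x k = x j - x k + m * shiftDiff i j k := by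
  simp only [shiftVec, shiftDiff]
  split_ifs <;> push_cast <;> ring

lemma shiftVec_apply_sub_shiftVec_apply (m : ℕ) (i : Fin m) (x y : Fin m → ℝ) (j : Fin m) :
    shiftVec m i y j - shiftVec m i x j = y j - x j := by
  simp only [shiftVec]
  ring

def OffWalls (m : ℕ) (x : Fin m → ℝ) : Prop :=
  ∀ j k : Fin m, j ≠ k → ∀ t : ℤ, x j - x k ≠ (m : ℝ) * t

section OffWalls

variable {m : ℕ} {x : Fin m → ℝ}

lemma OffWalls.injective (h : OffWalls m x) : Injective x :=
  fun j k hjk => by_contra fun hne => h j k hne 0 (by simp [hjk])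

lemma OffWalls.shiftVec (h : OffWalls m x) (i : Fin m) : OffWalls m (shiftVec m i x) := by
  intro j k hjk t ht
  rw [shiftVec_sub_shiftVec] at ht
  exact h j k hjk (t - shiftDiff i j k) (by push_cast; linarith)

lemma OffWalls.comp (h : OffWalls m x) (σ : Equiv.Perm (Fin m)) : OffWalls m (x ∘ σ) :=
  fun j k hjk => h (σ j) (σ k) (σ.injective.ne hjk)

lemma OffWalls.stepsV (h : OffWalls m x) (w : ℕ → Fin m) (t : ℕ) :
    OffWalls m (stepsV m w x t) := by
  induction t with
  | zero => exact h
  | succ t ih => exact (ih.shiftVec (w t)).comp _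

end OffWalls

section SameClosedAlcove

variable {m : ℕ} {x y : Fin m → ℝ}

lemma SameClosedAlcove.monovary (h : SameClosedAlcove m x y) : Monovary y x := by
  intro j k hjk
  have := (h k j 0).2 (by simpa using hjk)
  simp only [Int.cast_zero, mul_zero] at this
  linarith

lemma SameClosedAlcove.shiftVec (h : SameClosedAlcove m x y) (i : Fin m) :
    SameClosedAlcove m (shiftVec m i x) (shiftVec m i y) := by
  intro j k t
  have hx := shiftVec_sub_shiftVec m i j k x
  have hy := shiftVec_sub_shiftVec m i j k y
  obtain ⟨hlt, hgt⟩ := h j k (t - shiftDiff i j k)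
  push_cast at hlt hgt
  constructor
  · intro h'
    linarith [hlt (by linarith)]
  · intro h'
    linarith [hgt (by linarith)]

lemma SameClosedAlcove.comp (h : SameClosedAlcove m x y) (σ : Equiv.Perm (Fin m)) :
    SameClosedAlcove m (x ∘ σ) (y ∘ σ) :=
  fun j k => h (σ j) (σ k)

end SameClosedAlcove

noncomputable def floorDiff (m : ℕ) (x : Fin m → ℝ) (j k : Fin m) : ℤ :=
  ⌊(x j - x k) / m⌋

section FloorDiff

variable {m : ℕ}

lemma sub_le_mul_iff_neg_le_floorDiff (hm : 0 < m) (x : Fin m → ℝ) (j k : Fin m) (t : ℤ) :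
    x j - x k ≤ m * t ↔ -t ≤ floorDiff m x k j := by
  have hm' : (0 : ℝ) < m := by exact_mod_cast hm
  rw [floorDiff, Int.le_floor, le_div_iff₀ hm']
  push_cast
  constructor <;> intro <;> linarith

lemma shiftVec_le_shiftVec_iff (hm : 0 < m) (i : Fin m) (x : Fin m → ℝ) (j k : Fin m) :
    shiftVec m i x j ≤ shiftVec m i x k ↔ shiftDiff i j k ≤ floorDiff m x k j := by
  rw [← neg_neg (shiftDiff i j k), ← sub_le_mul_iff_neg_le_floorDiff hm]
  have := shiftVec_sub_shiftVec m i j k x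
  push_cast
  constructor <;> intro <;> linarith

lemma floorDiff_shiftVec (hm : 0 < m) (i : Fin m) (x : Fin m → ℝ) (j k : Fin m) :
    floorDiff m (shiftVec m i x) j k = floorDiff m x j k + shiftDiff i j k := by
  have hm' : (m : ℝ) ≠ 0 := by positivity
  rw [floorDiff, shiftVec_sub_shiftVec, add_div, mul_div_cancel_left₀ _ hm',
    Int.floor_add_intCast, floorDiff]

lemma sort_shiftVec_eq_of_floorDiff_eq (hm : 0 < m) {x y : Fin m → ℝ}
    (h : floorDiff m x = floorDiff m y) (i : Fin m) :
    Tuple.sort (shiftVec m i y) = Tuple.sort (shiftVec m i x) :=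
  Tuple.sort_eq_sort_of_le_iff fun j k => by
    rw [shiftVec_le_shiftVec_iff hm, shiftVec_le_shiftVec_iff hm, h]

lemma floorDiff_letterV_eq (hm : 0 < m) {x y : Fin m → ℝ}
    (h : floorDiff m x = floorDiff m y) (i : Fin m) :
    floorDiff m (letterV m i x) = floorDiff m (letterV m i y) := by
  funext j k
  simp only [letterV, sortVec, sort_shiftVec_eq_of_floorDiff_eq hm h]
  change floorDiff m (shiftVec m i x) _ _ = floorDiff m (shiftVec m i y) _ _
  rw [floorDiff_shiftVec hm, floorDiff_shiftVec hm, h]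

lemma floorDiff_mem_Icc (hm : 0 < m) {x : Fin m → ℝ} {C : ℝ} (h : ∀ j, |x j| ≤ C)
    (j k : Fin m) : floorDiff m x j k ∈ Set.Icc ⌊-(2 * C)⌋ ⌊2 * C⌋ := by
  have hm' : (1 : ℝ) ≤ m := by exact_mod_cast hm
  have hd : |(x j - x k) / m| ≤ 2 * C := calc
    |(x j - x k) / m| ≤ |x j - x k| := by
      rw [abs_div, Nat.abs_cast]; exact div_le_self (abs_nonneg _) hm'
    _ ≤ |x j| + |x k| := abs_sub _ _
    _ ≤ 2 * C := by linarith [h j, h k]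
  exact ⟨Int.floor_mono (neg_le_of_abs_le hd), Int.floor_mono (le_of_abs_le hd)⟩

end FloorDiff

section Orbit

variable {m : ℕ}

noncomputable def sortPerm (w : ℕ → Fin m) (x : Fin m → ℝ) (t : ℕ) : Equiv.Perm (Fin m) :=
  Tuple.sort (shiftVec m (w t) (stepsV m w x t))

/-- `trackPerm w x t j` is the label (initial position) of the coordinate that sits at position
`j` after `t` steps. -/
noncomputable def trackPerm (w : ℕ → Fin m) (x : Fin m → ℝ) : ℕ → Equiv.Perm (Fin m)
  | 0 => 1
  | t + 1 => trackPerm w x t * sortPerm w x t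

/-- `labelCount w x t β` counts how often the coordinate labelled `β` has been raised by `m`
during the first `t` steps. -/
noncomputable def labelCount (w : ℕ → Fin m) (x : Fin m → ℝ) : ℕ → Fin m → ℤ
  | 0 => 0
  | t + 1 => fun β => labelCount w x t β + if (trackPerm w x t).symm β = w t then 1 else 0

variable (w : ℕ → Fin m)

lemma stepsV_succ (x : Fin m → ℝ) (t : ℕ) :
    stepsV m w x (t + 1) = shiftVec m (w t) (stepsV m w x t) ∘ sortPerm w x t :=
  rfl

lemma stepsV_trackPerm_symm (x : Fin m → ℝ) (t : ℕ) (β : Fin m) :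
    stepsV m w x t ((trackPerm w x t).symm β) = x β + m * labelCount w x t β - t := by
  induction t with
  | zero => simp [trackPerm, labelCount, stepsV, Equiv.Perm.one_def]
  | succ t ih =>
    simp only [stepsV_succ, trackPerm, labelCount, comp_apply, Equiv.Perm.mul_def,
      Equiv.symm_trans_apply, Equiv.apply_symm_apply, shiftVec, ih]
    split_ifs <;> push_cast <;> ring

lemma stepsV_apply (x : Fin m → ℝ) (t : ℕ) (j : Fin m) :
    stepsV m w x t j =
      x (trackPerm w x t j) + m * labelCount w x t (trackPerm w x t j) - t := by
  simpa using stepsV_trackPerm_symm w x t (trackPerm w x t j)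

lemma labelCount_succ_sub_le (x : Fin m → ℝ) (t : ℕ) (α β : Fin m) :
    labelCount w x (t + 1) β - labelCount w x (t + 1) α ≤
      labelCount w x t β - labelCount w x t α + 1 := by
  simp only [labelCount]
  split_ifs <;> omega

lemma stepsV_add (x : Fin m → ℝ) (a b : ℕ) :
    stepsV m w x (a + b) = stepsV m (fun i => w (a + i)) (stepsV m w x a) b := by
  induction b with
  | zero => rfl
  | succ b ih => exact congrArg (letterV m (w (a + b))) ih

lemma trackPerm_add (x : Fin m → ℝ) (a b : ℕ) :
    trackPerm w x (a + b) =
      trackPerm w x a * trackPerm (fun i => w (a + i)) (stepsV m w x a) b := by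
  induction b with
  | zero => simp [trackPerm]
  | succ b ih =>
    rw [← add_assoc, trackPerm, trackPerm, ih, mul_assoc, sortPerm, sortPerm, stepsV_add]

variable {w}

lemma stepsV_congr {w' : ℕ → Fin m} (x : Fin m → ℝ) {t : ℕ} (h : ∀ i < t, w i = w' i) :
    stepsV m w x t = stepsV m w' x t := by
  induction t with
  | zero => rfl
  | succ t ih =>
    rw [stepsV, stepsV, ih fun i hi => h i (by omega), h t (by omega)]

lemma stepsV_add_of_periodic {c : ℕ} (hw : Periodic w c) (x : Fin m → ℝ) (t : ℕ) :
    stepsV m w x (c + t) = stepsV m w (stepsV m w x c) t := by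
  rw [stepsV_add, show (fun i => w (c + i)) = w from funext fun i => by rw [add_comm, hw]]

lemma trackPerm_add_of_periodic {c : ℕ} (hw : Periodic w c) (x : Fin m → ℝ) (t : ℕ) :
    trackPerm w x (c + t) = trackPerm w x c * trackPerm w (stepsV m w x c) t := by
  rw [trackPerm_add, show (fun i => w (c + i)) = w from funext fun i => by rw [add_comm, hw]]

end Orbit

section Follows

variable {m : ℕ} (w : ℕ → Fin m)

def Follows (x y : Fin m → ℝ) : Prop :=
  ∀ t, stepsV m w y (t + 1) = shiftVec m (w t) (stepsV m w y t) ∘ sortPerm w x t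

variable {w} {x y : Fin m → ℝ}

lemma Follows.stepsV_eq (h : Follows w x y) (t : ℕ) :
    stepsV m w y t = stepsV m w x t + (y - x) ∘ trackPerm w x t := by
  induction t with
  | zero => funext j; simp [stepsV, trackPerm]
  | succ t ih =>
    funext j
    rw [h t, stepsV_succ]
    simp only [comp_apply, Pi.add_apply, trackPerm, Equiv.Perm.mul_apply, ih, shiftVec]
    ring

lemma floorDiff_stepsV_eq (hm : 0 < m) (h : floorDiff m x = floorDiff m y) (t : ℕ) :
    floorDiff m (stepsV m w x t) = floorDiff m (stepsV m w y t) := by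
  induction t with
  | zero => exact h
  | succ t ih => exact floorDiff_letterV_eq hm ih (w t)

lemma follows_of_floorDiff_eq (hm : 0 < m) (h : floorDiff m x = floorDiff m y) :
    Follows w x y := fun t => by
  rw [stepsV_succ, sortPerm, sortPerm, sort_shiftVec_eq_of_floorDiff_eq hm
    (floorDiff_stepsV_eq hm h t) (w t)]

lemma letterV_eq_comp_of_monovary {a b : Fin m → ℝ} (ha : OffWalls m a) (i : Fin m)
    (h : Monovary (shiftVec m i b) (shiftVec m i a)) :
    letterV m i b = shiftVec m i b ∘ Tuple.sort (shiftVec m i a) :=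
  sortVec_eq_comp_sort_of_monovary h (ha.shiftVec i).injective

lemma follows_of_monovary (hx : OffWalls m x)
    (h : ∀ t, Monovary (shiftVec m (w t) (stepsV m w y t)) (shiftVec m (w t) (stepsV m w x t))) :
    Follows w x y := fun t =>
  letterV_eq_comp_of_monovary (hx.stepsV w t) (w t) (h t)

lemma SameClosedAlcove.stepsV (hx : OffWalls m x) (h : SameClosedAlcove m x y) (t : ℕ) :
    SameClosedAlcove m (stepsV m w x t) (stepsV m w y t) := by
  induction t with
  | zero => exact h
  | succ t ih =>
    have h' := ih.shiftVec (w t)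
    rw [stepsV_succ, _root_.stepsV, letterV_eq_comp_of_monovary (hx.stepsV w t) (w t) h'.monovary]
    exact h'.comp _

lemma SameClosedAlcove.follows (hx : OffWalls m x) (h : SameClosedAlcove m x y) :
    Follows w x y :=
  follows_of_monovary hx fun t => ((h.stepsV hx t).shiftVec (w t)).monovary

lemma Follows.sub_le_of_pos (hf : Follows w x y) {t : ℕ}
    (hmono : Monovary (shiftVec m (w t) (stepsV m w y t)) (shiftVec m (w t) (stepsV m w x t)))
    {α β : Fin m} (hpos : 0 < x β - x α +
      m * ((labelCount w x (t + 1) β - labelCount w x (t + 1) α : ℤ) : ℝ)) :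
    (y α - x α) - (y β - x β) ≤
      x β - x α + m * ((labelCount w x (t + 1) β - labelCount w x (t + 1) α : ℤ) : ℝ) := by
  have hmono' : Monovary (stepsV m w y (t + 1)) (stepsV m w x (t + 1)) := by
    rw [hf t, stepsV_succ]
    exact hmono.comp_right _
  have hα := stepsV_trackPerm_symm w x (t + 1) α
  have hβ := stepsV_trackPerm_symm w x (t + 1) β
  push_cast at hpos ⊢
  have := hmono' (i := (trackPerm w x (t + 1)).symm α) (j := (trackPerm w x (t + 1)).symm β)
    (by linarith)
  rw [hf.stepsV_eq] at this
  simp only [Pi.add_apply, comp_apply, Equiv.apply_symm_apply, Pi.sub_apply] at this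
  linarith

end Follows

section Distance

variable {m : ℕ} (w : ℕ → Fin m) (x y : Fin m → ℝ)

noncomputable def sqDist (t : ℕ) : ℝ :=
  ∑ j, (stepsV m w y t j - stepsV m w x t j) ^ 2

lemma sqDist_eq_sum_shiftVec (t : ℕ) : sqDist w x y t =
    ∑ j, (shiftVec m (w t) (stepsV m w y t) j - shiftVec m (w t) (stepsV m w x t) j) ^ 2 := by
  simp only [sqDist, shiftVec_apply_sub_shiftVec_apply]

lemma sqDist_succ_le (t : ℕ) : sqDist w x y (t + 1) ≤ sqDist w x y t :=
  (sum_sq_sortVec_sub_le _ _).trans_eq (sqDist_eq_sum_shiftVec w x y t).symm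

lemma sqDist_succ_eq_iff (t : ℕ) : sqDist w x y (t + 1) = sqDist w x y t ↔
    Monovary (shiftVec m (w t) (stepsV m w y t)) (shiftVec m (w t) (stepsV m w x t)) := by
  rw [sqDist_eq_sum_shiftVec w x y t]
  exact sum_sq_sortVec_sub_eq_iff _ _

lemma sqDist_antitone : Antitone (sqDist w x y) :=
  antitone_nat_of_succ_le (sqDist_succ_le w x y)

lemma abs_stepsV_sub_le (t : ℕ) (j : Fin m) :
    |stepsV m w y t j - stepsV m w x t j| ≤ √(sqDist w x y 0) := by
  refine Real.abs_le_sqrt ((single_le_sum (f := fun j => (stepsV m w y t j -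
    stepsV m w x t j) ^ 2) (fun _ _ => sq_nonneg _) (mem_univ j)).trans ?_)
  exact sqDist_antitone w x y (Nat.zero_le t)

end Distance

section FixedPoint

variable {m n : ℕ} {w : ℕ → Fin m} {xp : Fin m → ℝ}

lemma stepsV_periodic (hw : Periodic w n) (hfix : stepsV m w xp n = xp) :
    Periodic (stepsV m w xp) n := fun t => by
  rw [add_comm, stepsV_add_of_periodic hw, hfix]

lemma stepsV_mul (hw : Periodic w n) (hfix : stepsV m w xp n = xp) (k : ℕ) :
    stepsV m w xp (n * k) = xp := by
  rw [mul_comm]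
  exact (stepsV_periodic hw hfix).nat_mul_eq k

lemma trackPerm_mul (hw : Periodic w n) (hfix : stepsV m w xp n = xp) (k : ℕ) :
    trackPerm w xp (n * k) = trackPerm w xp n ^ k := by
  induction k with
  | zero => rfl
  | succ k ih =>
    rw [mul_add_one, trackPerm_add_of_periodic (hw.of_dvd (dvd_mul_right n k)), ih,
      stepsV_mul hw hfix, pow_succ]

lemma dvd_of_trackPerm_pow_apply_eq (hcop : Nat.Coprime m n) (hw : Periodic w n)
    (hfix : stepsV m w xp n = xp) (j : Fin m) (L : ℕ) (h : (trackPerm w xp n ^ L) j = j) :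
    m ∣ L := by
  have key := stepsV_apply w xp (n * L) j
  rw [stepsV_mul hw hfix, trackPerm_mul hw hfix, h] at key
  have : ((m * labelCount w xp (n * L) j : ℤ) : ℝ) = ((n * L : ℕ) : ℤ) := by
    push_cast at key ⊢; linarith
  exact hcop.dvd_of_dvd_mul_left (Int.natCast_dvd_natCast.1 ⟨_, (Int.cast_injective this).symm⟩)

lemma trackPerm_pow_card (hcop : Nat.Coprime m n) (hw : Periodic w n)
    (hfix : stepsV m w xp n = xp) : trackPerm w xp n ^ m = 1 :=
  pow_eq_one_of_dvd (dvd_of_trackPerm_pow_apply_eq hcop hw hfix)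

lemma exists_trackPerm_pow_apply_eq (hcop : Nat.Coprime m n) (hw : Periodic w n)
    (hfix : stepsV m w xp n = xp) (i j : Fin m) : ∃ k : ℕ, (trackPerm w xp n ^ k) i = j := by
  obtain ⟨k, hk⟩ := surjective_pow_apply_of_dvd (dvd_of_trackPerm_pow_apply_eq hcop hw hfix) i j
  exact ⟨k, hk⟩

lemma exists_abs_stepsV_le (hn : 0 < n) (hw : Periodic w n) (hfix : stepsV m w xp n = xp)
    (x : Fin m → ℝ) : ∃ C, ∀ t j, |stepsV m w x t j| ≤ C := by
  obtain ⟨C, hC⟩ := (Set.finite_range fun q : Fin n × Fin m => |stepsV m w xp q.1 q.2|).bddAbove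
  refine ⟨√(sqDist w xp x 0) + C, fun t j => ?_⟩
  have hxp : |stepsV m w xp t j| ≤ C := by
    rw [← (stepsV_periodic hw hfix).map_mod_nat t]
    exact hC ⟨(⟨t % n, Nat.mod_lt t hn⟩, j), rfl⟩
  calc |stepsV m w x t j|
      ≤ |stepsV m w x t j - stepsV m w xp t j| + |stepsV m w xp t j| := by
        linarith [abs_sub_abs_le_abs_sub (stepsV m w x t j) (stepsV m w xp t j)]
    _ ≤ √(sqDist w xp x 0) + C := add_le_add (abs_stepsV_sub_le w xp x t j) hxp

lemma exists_floorDiff_stepsV_eq (hm : 0 < m) (hn : 0 < n) (hw : Periodic w n)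
    (hfix : stepsV m w xp n = xp) (x : Fin m → ℝ) : ∃ a b, a < b ∧
      floorDiff m (stepsV m w x (n * a)) = floorDiff m (stepsV m w x (n * b)) := by
  obtain ⟨C, hC⟩ := exists_abs_stepsV_le hn hw hfix x
  refine (Set.finite_Icc (fun _ _ => ⌊-(2 * C)⌋) fun _ _ => ⌊2 * C⌋).exists_lt_map_eq_of_forall_mem
    (f := fun a => floorDiff m (stepsV m w x (n * a))) fun a => Set.mem_Icc.2 ⟨?_, ?_⟩
  exacts [fun j k => (floorDiff_mem_Icc hm (hC _) j k).1,
    fun j k => (floorDiff_mem_Icc hm (hC _) j k).2]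

lemma exists_stepsV_periodic (hm : 0 < m) (hn : 0 < n) (hw : Periodic w n)
    (hfix : stepsV m w xp n = xp) (x : Fin m → ℝ) : ∃ a R, 0 < R ∧ n ∣ R ∧
      stepsV m w (stepsV m w x (n * a)) R = stepsV m w x (n * a) := by
  obtain ⟨a, b, hab, hfl⟩ := exists_floorDiff_stepsV_eq hm hn hw hfix x
  obtain ⟨C, hC⟩ := exists_abs_stepsV_le hn hw hfix x
  set u := stepsV m w x (n * a)
  set P := n * (b - a)
  have hu (t : ℕ) : stepsV m w u t = stepsV m w x (n * a + t) :=
    (stepsV_add_of_periodic (hw.of_dvd (dvd_mul_right n a)) x t).symm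
  have huP : stepsV m w u P = stepsV m w x (n * b) := by
    rw [hu, ← mul_add, Nat.add_sub_cancel' hab.le]
  set z : ℕ → Fin m → ℝ := fun k => stepsV m w u (k * P)
  have hz_succ (k : ℕ) : z (k + 1) = stepsV m w (z k) P := by
    simp only [z, add_one_mul]
    exact stepsV_add_of_periodic (hw.of_dvd (Dvd.dvd.mul_left (dvd_mul_right n _) k)) u P
  have hfloor (k : ℕ) : floorDiff m (z k) = floorDiff m u := by
    induction k with
    | zero => simp [z, stepsV]
    | succ k ih => rw [hz_succ, ← floorDiff_stepsV_eq hm ih.symm P, huP, hfl]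
  have hz (k : ℕ) : z (k + 1) = z 1 + (z k - z 0) ∘ trackPerm w u P := by
    rw [hz_succ, (follows_of_floorDiff_eq hm (hfloor k).symm).stepsV_eq P]
    simp [z, stepsV]
  obtain ⟨r, hr, hzr⟩ := exists_pos_eq_of_eq_add_comp hz fun k j => by
    simp only [z, hu]
    exact hC _ j
  refine ⟨a, r * P, Nat.mul_pos hr (Nat.mul_pos hn (by omega)),
    Dvd.dvd.mul_left (dvd_mul_right n _) r, ?_⟩
  simpa [z, stepsV] using hzr

lemma gap_neg_of_trackPerm_pow_apply_eq (hw : Periodic w n) (hfix : stepsV m w xp n = xp)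
    (hinj : Injective xp) {j₀ : Fin m} (hj₀ : ∀ j, xp j ≤ xp j₀) {α β : Fin m} (hαβ : α ≠ β) {k : ℕ}
    (hk : (trackPerm w xp n ^ k) j₀ = α) : xp β - xp α +
      m * ((labelCount w xp (n * k) β - labelCount w xp (n * k) α : ℤ) : ℝ) < 0 := by
  have hα := stepsV_trackPerm_symm w xp (n * k) α
  have hβ := stepsV_trackPerm_symm w xp (n * k) β
  rw [stepsV_mul hw hfix, trackPerm_mul hw hfix] at hα hβ
  rw [(Equiv.symm_apply_eq _).2 hk.symm] at hα
  have hne : (trackPerm w xp n ^ k).symm β ≠ j₀ :=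
    fun h => hαβ (((Equiv.symm_apply_eq _).1 h).trans hk).symm
  have := lt_of_le_of_ne (hj₀ _) (hinj.ne hne)
  push_cast
  linarith

/-- The gap between the labels `β` and `α` grows by at most `m` per step; it is negative when `α`
sits at the top coordinate of `xp` and positive when `β` does. -/
lemma exists_labelCount_sub_eq (hcop : Nat.Coprime m n) (hw : Periodic w n)
    (hfix : stepsV m w xp n = xp) (hinj : Injective xp) {α β : Fin m} (hαβ : α ≠ β) {g : ℤ}
    (hg : ∀ G : ℤ, 0 < xp β - xp α + m * G ↔ g ≤ G) :
    ∃ t, labelCount w xp (t + 1) β - labelCount w xp (t + 1) α = g := by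
  have : Nonempty (Fin m) := ⟨α⟩
  obtain ⟨j₀, hj₀⟩ := Finite.exists_max xp
  obtain ⟨k₁, hk₁⟩ := exists_trackPerm_pow_apply_eq hcop hw hfix j₀ α
  obtain ⟨k₂, hk₂⟩ := exists_trackPerm_pow_apply_eq hcop hw hfix j₀ β
  have hk₂' : (trackPerm w xp n ^ (k₂ + m * k₁)) j₀ = β := by
    rw [pow_add, pow_mul, trackPerm_pow_card hcop hw hfix, one_pow, mul_one, hk₂]
  have h₁ : labelCount w xp (n * k₁) β - labelCount w xp (n * k₁) α < g := by
    by_contra! h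
    linarith [(hg _).2 h, gap_neg_of_trackPerm_pow_apply_eq hw hfix hinj hj₀ hαβ hk₁]
  have h₂ : g ≤ labelCount w xp (n * (k₂ + m * k₁)) β - labelCount w xp (n * (k₂ + m * k₁)) α := by
    refine (hg _).1 ?_
    have := gap_neg_of_trackPerm_pow_apply_eq hw hfix hinj hj₀ hαβ.symm hk₂'
    push_cast at this ⊢
    linarith
  have hle : n * k₁ ≤ n * (k₂ + m * k₁) :=
    Nat.mul_le_mul_left n (le_add_left (Nat.le_mul_of_pos_left k₁ α.pos))
  obtain ⟨t, ht, hgt⟩ :=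
    exists_lt_eq_of_le_add_one (fun t => labelCount_succ_sub_le w xp t α β) hle h₁ h₂
  obtain ⟨s, rfl⟩ : ∃ s, t = s + 1 := ⟨t - 1, by omega⟩
  exact ⟨s, hgt⟩

lemma sub_le_of_forall_monovary (hm : 0 < m) (hcop : Nat.Coprime m n) (hw : Periodic w n)
    (hfix : stepsV m w xp n = xp) (hxp : OffWalls m xp) {y : Fin m → ℝ}
    (h : ∀ t, Monovary (shiftVec m (w t) (stepsV m w y t)) (shiftVec m (w t) (stepsV m w xp t)))
    {α β : Fin m} {T : ℤ} (hT : xp α - xp β < m * T) : y α - y β ≤ m * T := by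
  rcases eq_or_ne α β with rfl | hαβ
  · simp only [sub_self] at hT ⊢
    exact hT.le
  obtain ⟨g, hg⟩ := exists_int_threshold hm (xp β - xp α)
  obtain ⟨t, ht⟩ := exists_labelCount_sub_eq hcop hw hfix hxp.injective hαβ hg
  have hle := (follows_of_monovary hxp h).sub_le_of_pos (h t) (ht ▸ (hg g).2 le_rfl)
  have hgT : (g : ℝ) ≤ T := Int.cast_le.2 ((hg T).1 (by linarith))
  rw [ht] at hle
  linarith [mul_le_mul_of_nonneg_left hgT (Nat.cast_nonneg m)]

theorem sameClosedAlcove_of_forall_monovary (hm : 0 < m) (hcop : Nat.Coprime m n)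
    (hw : Periodic w n) (hfix : stepsV m w xp n = xp) (hxp : OffWalls m xp) {y : Fin m → ℝ}
    (h : ∀ t, Monovary (shiftVec m (w t) (stepsV m w y t)) (shiftVec m (w t) (stepsV m w xp t))) :
    SameClosedAlcove m xp y := fun α β T =>
  ⟨sub_le_of_forall_monovary hm hcop hw hfix hxp h, fun hT => by
    have := sub_le_of_forall_monovary hm hcop hw hfix hxp h (α := β) (β := α) (T := -T)
      (by push_cast; linarith)
    push_cast at this
    linarith⟩

theorem exists_sameClosedAlcove_stepsV (hm : 0 < m) (hn : 0 < n) (hcop : Nat.Coprime m n)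
    (hw : Periodic w n) (hfix : stepsV m w xp n = xp) (hxp : OffWalls m xp) (x : Fin m → ℝ) :
    ∃ k, SameClosedAlcove m xp (stepsV m w x (n * k)) := by
  obtain ⟨a, R, hR, hnR, hper⟩ := exists_stepsV_periodic hm hn hw hfix x
  set u := stepsV m w x (n * a)
  have hdist : Periodic (sqDist w xp u) R := fun t => by
    simp only [sqDist]
    rw [add_comm, stepsV_add_of_periodic (hw.of_dvd hnR), hper,
      ← add_comm t, (stepsV_periodic hw hfix).of_dvd hnR]
  exact ⟨a, sameClosedAlcove_of_forall_monovary hm hcop hw hfix hxp fun t =>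
    (sqDist_succ_eq_iff w xp u t).1 ((sqDist_antitone w xp u).apply_succ_eq_of_periodic hR hdist t)⟩

theorem stepsV_mul_card_eq_self (hcop : Nat.Coprime m n) (hw : Periodic w n)
    (hfix : stepsV m w xp n = xp) (hxp : OffWalls m xp) {y : Fin m → ℝ}
    (hy : SameClosedAlcove m xp y) : stepsV m w y (n * m) = y := by
  rw [(hy.follows hxp).stepsV_eq, stepsV_mul hw hfix, trackPerm_mul hw hfix,
    trackPerm_pow_card hcop hw hfix]
  simp

theorem sameClosedAlcove_of_stepsV_eq_self (hm : 0 < m) (hn : 0 < n) (hcop : Nat.Coprime m n)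
    (hw : Periodic w n) (hfix : stepsV m w xp n = xp) (hxp : OffWalls m xp) {x : Fin m → ℝ}
    {k : ℕ} (hk : 1 ≤ k) (hx : stepsV m w x (n * k) = x) : SameClosedAlcove m xp x := by
  obtain ⟨K, hK⟩ := exists_sameClosedAlcove_stepsV hm hn hcop hw hfix hxp x
  have hper : Periodic (stepsV m w x) (n * k) := fun t => by
    rw [add_comm, stepsV_add_of_periodic (hw.of_dvd (dvd_mul_right n k)), hx]
  have hidx : n * K + n * (K * (k - 1)) = K * (n * k) := by
    obtain ⟨k', rfl⟩ : ∃ k', k = k' + 1 := ⟨k - 1, by omega⟩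
    simp only [Nat.add_sub_cancel]
    ring
  have h := hK.stepsV (w := w) hxp (n * (K * (k - 1)))
  rwa [stepsV_mul hw hfix, ← stepsV_add_of_periodic (hw.of_dvd (dvd_mul_right n K)), hidx,
    ← smul_eq_mul, hper.nsmul_eq] at h

end FixedPoint

theorem periodic_points_are_alcove_general (m n : ℕ) (hm : 0 < m) (hn : 0 < n)
    (hcop : Nat.gcd m n = 1) (p : ℕ → Fin m)
    (xp : Fin m → ℝ) (hfix : stepsV m p xp n = xp)
    (halc : ∀ j k : Fin m, j ≠ k → ∀ t : ℤ, xp j - xp k ≠ (m : ℝ) * t) :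
    (∀ y : Fin m → ℝ, InV m y → SameClosedAlcove m xp y →
      stepsV m (fun i => p (i % n)) y (n * m) = y) ∧
    (∀ x : Fin m → ℝ, InV m x →
      ∃ k : ℕ, SameClosedAlcove m xp (stepsV m (fun i => p (i % n)) x (n * k))) ∧
    (∀ x : Fin m → ℝ, InV m x →
      ((∃ k : ℕ, 1 ≤ k ∧ stepsV m (fun i => p (i % n)) x (n * k) = x) ↔
        SameClosedAlcove m xp x)) := by
  have hw : Periodic (fun i => p (i % n)) n := fun i => by simp only [Nat.add_mod_right]
  have hfix' : stepsV m (fun i => p (i % n)) xp n = xp :=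
    (stepsV_congr xp fun i hi => congrArg p (Nat.mod_eq_of_lt hi)).trans hfix
  refine ⟨fun y _ => stepsV_mul_card_eq_self hcop hw hfix' halc,
    fun x _ => exists_sameClosedAlcove_stepsV hm hn hcop hw hfix' halc x, fun x _ => ⟨?_, ?_⟩⟩
  · rintro ⟨k, hk, hx⟩
    exact sameClosedAlcove_of_stepsV_eq_self hm hn hcop hw hfix' halc hk hx
  · exact fun hx => ⟨m, hm, stepsV_mul_card_eq_self hcop hw hfix' halc hx⟩

/-- Let `gcd(m,n) = 1` and `p` an `(m,n)`-parking function with fixed point `x_p`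
in (the interior of) the alcove `A_p`.  Then: every point of the closed alcove
`A_p` is periodic with period dividing `m`; every point of `V^m` is eventually
mapped into `A_p`; and the periodic points of `p` are exactly the points of `A_p`
(so the periodic non-fixed points are exactly `A_p \ {x_p}`). -/
theorem periodic_points_are_alcove (m n : ℕ) (hm : 0 < m) (hn : 0 < n)
    (hcop : Nat.gcd m n = 1) (p : ℕ → Fin m) (hpark : IsParking m n p)
    (xp : Fin m → ℝ) (hxp : InV m xp) (hfix : stepsV m p xp n = xp)
    (halc : ∀ j k : Fin m, j ≠ k → ∀ t : ℤ, xp j - xp k ≠ (m : ℝ) * t) :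
    (∀ y : Fin m → ℝ, InV m y → SameClosedAlcove m xp y →
      stepsV m (fun i => p (i % n)) y (n * m) = y) ∧
    (∀ x : Fin m → ℝ, InV m x →
      ∃ k : ℕ, SameClosedAlcove m xp (stepsV m (fun i => p (i % n)) x (n * k))) ∧
    (∀ x : Fin m → ℝ, InV m x →
      ((∃ k : ℕ, 1 ≤ k ∧ stepsV m (fun i => p (i % n)) x (n * k) = x) ↔
        SameClosedAlcove m xp x)) :=
  periodic_points_are_alcove_general m n hm hn hcop p xp hfix halc
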